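/- arXiv:0806.0831 — 8 statements merged into one kernel-verified Lean document; each statement's English description precedes it below -/
import Mathlib

section
/- Let m : [0,1) → ℝ be strictly decreasing and satisfy m((x+y)/(1+xy)) = m(x)·m(y) for all x, y ∈ [0,1). Then there exists a constant ξ > 0 such that m(x) = ((1-x)/(1+x))^ξ for all x ∈ [0,1). -/
/-!
With `x = (1 - t) / (1 + t)`, the addition `(x + y) / (1 + x y)` becomes multiplication of the
`t`'s. Hence `g u := m ((1 - e⁻ᵘ) / (1 + e⁻ᵘ))` satisfies `g (u + v) = g u * g v` on `[0, ∞)` and is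
strictly decreasing, so `-log ∘ g` is a monotone solution of Cauchy's equation on the half-line and
therefore linear, `-log (g u) = ξ u`. Undoing the substitution gives
`m x = ((1 - x) / (1 + x)) ^ ξ`.
-/

open Real Set

theorem AddMonoidHom.eq_mul_map_one_of_monotone (f : ℝ →+ ℝ) (hf : Monotone f) (x : ℝ) :
    f x = x * f 1 := by
  have map_rat (q : ℚ) : f q = q * f 1 := by
    simpa [Rat.smul_def] using map_ratCast_smul f ℝ ℝ q 1
  have f_one_nonneg : 0 ≤ f 1 := by simpa using hf zero_le_one
  have upper (x : ℝ) : f x ≤ x * f 1 := by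
    by_contra! h
    set δ := (f x - x * f 1) / (f 1 + 1)
    have hδ : 0 < δ := div_pos (by linarith) (by linarith)
    obtain ⟨q, hxq, hqδ⟩ := exists_rat_btwn (lt_add_of_pos_right x hδ)
    have hfq : f x ≤ q * f 1 := map_rat q ▸ hf hxq.le
    have hδ_mul : δ * (f 1 + 1) = f x - x * f 1 := div_mul_cancel₀ _ (by linarith)
    nlinarith [mul_le_mul_of_nonneg_right hqδ.le f_one_nonneg]
  have lower : x * f 1 ≤ f x := by
    have := upper (-x)
    rw [map_neg] at this
    linarith
  exact le_antisymm (upper x) lower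

/-- Extending `f` by `a ↦ f a⁺ - f a⁻` turns the half-line equation into a group homomorphism. -/
theorem eq_mul_of_monotoneOn_of_map_add {f : ℝ → ℝ}
    (hadd : ∀ a, 0 ≤ a → ∀ b, 0 ≤ b → f (a + b) = f a + f b) (hmono : MonotoneOn f (Ici 0))
    {x : ℝ} (hx : 0 ≤ x) : f x = x * f 1 := by
  have f_zero : f 0 = 0 := by simpa using hadd 0 le_rfl 0 le_rfl
  let F : ℝ →+ ℝ := AddMonoidHom.mk' (fun a => f a⁺ - f a⁻) fun a b => by
    have hsplit : (a + b)⁺ + (a⁻ + b⁻) = (a⁺ + b⁺) + (a + b)⁻ := by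
      linarith [posPart_sub_negPart a, posPart_sub_negPart b, posPart_sub_negPart (a + b)]
    have := congrArg f hsplit
    simp only [hadd _ (posPart_nonneg _) _ (add_nonneg (negPart_nonneg _) (negPart_nonneg _)),
      hadd _ (add_nonneg (posPart_nonneg _) (posPart_nonneg _)) _ (negPart_nonneg _),
      hadd _ (negPart_nonneg a) _ (negPart_nonneg b),
      hadd _ (posPart_nonneg a) _ (posPart_nonneg b)] at this
    linarith
  have F_of_nonneg {a : ℝ} (ha : 0 ≤ a) : F a = f a := by
    simp [F, posPart_eq_self.mpr ha, negPart_eq_zero.mpr ha, f_zero]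
  have F_mono : Monotone F := fun a b hab => by
    have hba : 0 ≤ b - a := sub_nonneg.mpr hab
    have : 0 ≤ F (b - a) := F_of_nonneg hba ▸ f_zero ▸ hmono self_mem_Ici hba hba
    rw [map_sub] at this
    linarith
  simpa [F_of_nonneg hx, F_of_nonneg zero_le_one] using F.eq_mul_map_one_of_monotone F_mono x

theorem exists_eq_exp_rpow_of_strictAntiOn_of_map_add {g : ℝ → ℝ}
    (hanti : StrictAntiOn g (Ici 0)) (hmul : ∀ u, 0 ≤ u → ∀ v, 0 ≤ v → g (u + v) = g u * g v) :
    ∃ c : ℝ, 0 < c ∧ ∀ u, 0 ≤ u → g u = exp (-u) ^ c := by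
  have g_pos {u : ℝ} (hu : 0 ≤ u) : 0 < g u := by
    have g_nonneg : 0 ≤ g u := by
      have hhalf : 0 ≤ u / 2 := by positivity
      rw [← add_halves u, hmul _ hhalf _ hhalf]
      exact mul_self_nonneg _
    refine g_nonneg.lt_of_ne fun h => ?_
    have h_succ : g (u + 1) = g u := by rw [hmul u hu 1 zero_le_one, ← h, zero_mul]
    exact (hanti hu (mem_Ici.mpr (by linarith)) (lt_add_one u)).ne h_succ
  set f : ℝ → ℝ := fun u => -log (g u)
  have f_strictMono : StrictMonoOn f (Ici 0) := fun u hu v hv huv =>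
    neg_lt_neg (log_lt_log (g_pos hv) (hanti hu hv huv))
  have f_linear {u : ℝ} (hu : 0 ≤ u) : f u = u * f 1 := by
    refine eq_mul_of_monotoneOn_of_map_add (fun a ha b hb => ?_) f_strictMono.monotoneOn hu
    simp only [f, hmul a ha b hb, log_mul (g_pos ha).ne' (g_pos hb).ne']
    ring
  refine ⟨f 1, ?_, fun u hu => ?_⟩
  · simpa [f_linear le_rfl] using f_strictMono self_mem_Ici (mem_Ici.mpr zero_le_one) zero_lt_one
  · rw [← exp_mul, ← exp_log (g_pos hu)]
    have := f_linear hu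
    simp only [f] at this
    congr 1
    linarith

noncomputable def cayley (t : ℝ) : ℝ := (1 - t) / (1 + t)

theorem cayley_cayley {t : ℝ} (ht : t ≠ -1) : cayley (cayley t) = t := by
  have : 1 + t ≠ 0 := fun h => ht (by linarith)
  unfold cayley
  field_simp
  ring

theorem cayley_mul {s t : ℝ} (hs : 0 ≤ s) (ht : 0 ≤ t) :
    cayley (s * t) = (cayley s + cayley t) / (1 + cayley s * cayley t) := by
  have : 0 < 1 + s := by linarith
  have : 0 < 1 + t := by linarith
  have hden : 1 + cayley s * cayley t = 2 * (1 + s * t) / ((1 + s) * (1 + t)) := by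
    unfold cayley
    field_simp
    ring
  rw [hden]
  unfold cayley
  field_simp
  ring

theorem strictAntiOn_cayley : StrictAntiOn cayley (Ioi (-1)) := fun s hs t ht hst => by
  simp only [mem_Ioi] at hs ht
  unfold cayley
  rw [div_lt_div_iff₀ (by linarith) (by linarith)]
  nlinarith

theorem cayley_mem_Ico {t : ℝ} (ht : t ∈ Ioc 0 1) : cayley t ∈ Ico 0 1 := by
  obtain ⟨ht0, ht1⟩ := ht
  exact ⟨div_nonneg (by linarith) (by linarith), (div_lt_one (by linarith)).mpr (by linarith)⟩

theorem cayley_mem_Ioc {x : ℝ} (hx : x ∈ Ico 0 1) : cayley x ∈ Ioc 0 1 := by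
  obtain ⟨hx0, hx1⟩ := hx
  exact ⟨div_pos (by linarith) (by linarith), (div_le_one (by linarith)).mpr (by linarith)⟩

theorem exp_neg_mem_Ioc {u : ℝ} (hu : 0 ≤ u) : exp (-u) ∈ Ioc 0 1 :=
  ⟨exp_pos _, exp_le_one_iff.mpr (by linarith)⟩

theorem stmt_0 (m : ℝ → ℝ)
    (hanti : StrictAntiOn m (Set.Ico (0:ℝ) 1))
    (hfe : ∀ x ∈ Set.Ico (0:ℝ) 1, ∀ y ∈ Set.Ico (0:ℝ) 1,
      m ((x + y) / (1 + x * y)) = m x * m y) :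
    ∃ ξ : ℝ, 0 < ξ ∧ ∀ x ∈ Set.Ico (0:ℝ) 1, m x = ((1 - x) / (1 + x)) ^ ξ := by
  set g : ℝ → ℝ := fun u => m (cayley (exp (-u)))
  have g_anti : StrictAntiOn g (Ici 0) := fun u hu v hv huv =>
    hanti (cayley_mem_Ico (exp_neg_mem_Ioc hu)) (cayley_mem_Ico (exp_neg_mem_Ioc hv))
      (strictAntiOn_cayley (neg_one_lt_zero.trans (exp_pos _)) (neg_one_lt_zero.trans (exp_pos _))
        (exp_lt_exp.mpr (neg_lt_neg huv)))
  have g_mul (u : ℝ) (hu : 0 ≤ u) (v : ℝ) (hv : 0 ≤ v) : g (u + v) = g u * g v := by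
    simp only [g, neg_add, exp_add, cayley_mul (exp_pos _).le (exp_pos _).le]
    exact hfe _ (cayley_mem_Ico (exp_neg_mem_Ioc hu)) _ (cayley_mem_Ico (exp_neg_mem_Ioc hv))
  obtain ⟨ξ, hξ, hg⟩ := exists_eq_exp_rpow_of_strictAntiOn_of_map_add g_anti g_mul
  refine ⟨ξ, hξ, fun x hx => ?_⟩
  obtain ⟨hc0, hc1⟩ := cayley_mem_Ioc hx
  have hu : 0 ≤ -log (cayley x) := neg_nonneg.mpr (log_nonpos hc0.le hc1)
  show m x = cayley x ^ ξ
  simpa only [g, neg_neg, exp_log hc0, cayley_cayley (show x ≠ -1 by linarith [hx.1])]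
    using hg _ hu
end

section
/- Let c > 0, ξ > 0, u : [0,c) → [0,c) a bijection, and define L(λ,v) = λ·((c-u(v))/(c+u(v)))^ξ and v ⊕ w = u⁻¹((u(v)+u(w))/(1 + u(v)u(w)/c²)). Then L satisfies the recursivity axiom [R]: L(L(λ,v), w) = L(λ, v ⊕ w) for all λ > 0 and v, w ∈ [0,c). -/
theorem stmt_10 (c : ℝ) (hc : 0 < c) (ξ : ℝ) (hξ : 0 < ξ)
    (u uinv : ℝ → ℝ)
    (humaps : ∀ v ∈ Set.Ico 0 c, u v ∈ Set.Ico 0 c)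
    (huinvmaps : ∀ t ∈ Set.Ico 0 c, uinv t ∈ Set.Ico 0 c)
    (hleft : ∀ v ∈ Set.Ico 0 c, uinv (u v) = v)
    (hright : ∀ t ∈ Set.Ico 0 c, u (uinv t) = t)
    (L : ℝ → ℝ → ℝ) (op : ℝ → ℝ → ℝ)
    (hL : ∀ l : ℝ, 0 < l → ∀ v ∈ Set.Ico 0 c, L l v = l * ((c - u v) / (c + u v)) ^ ξ)
    (hop : ∀ v ∈ Set.Ico 0 c, ∀ w ∈ Set.Ico 0 c,
      op v w = uinv ((u v + u w) / (1 + u v * u w / c ^ 2))) :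
    ∀ l : ℝ, 0 < l → ∀ v ∈ Set.Ico 0 c, ∀ w ∈ Set.Ico 0 c,
      L (L l v) w = L l (op v w) := by
  intro l hl v hv w hw
  obtain ⟨ha0, hac⟩ := humaps v hv
  obtain ⟨hb0, hbc⟩ := humaps w hw
  set a := u v with hadef
  set b := u w with hbdef
  have hD : (0:ℝ) < 1 + a * b / c ^ 2 := by positivity
  set s := (a + b) / (1 + a * b / c ^ 2) with hsdef
  have hs0 : 0 ≤ s := by positivity
  have hsc : s < c := by
    rw [hsdef, div_lt_iff₀ hD]
    have key : c * (1 + a * b / c ^ 2) - (a + b) = (c - a) * (c - b) / c := by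
      field_simp; ring
    have hpos : 0 < (c - a) * (c - b) / c :=
      div_pos (mul_pos (by linarith) (by linarith)) hc
    linarith
  have hsmem : s ∈ Set.Ico 0 c := ⟨hs0, hsc⟩
  have hLlv : 0 < L l v := by
    rw [hL l hl v hv]
    have : (0:ℝ) < (c - a) / (c + a) := by
      apply div_pos <;> linarith
    positivity
  rw [hL _ hLlv w hw, hL l hl v hv, hop v hv w hw,
    hL l hl _ (huinvmaps _ hsmem), hright _ hsmem]
  have key : (c - a) / (c + a) * ((c - b) / (c + b)) = (c - s) / (c + s) := by
    rw [hsdef]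
    have h1 : c + a ≠ 0 := by positivity
    have h2 : c + b ≠ 0 := by positivity
    have h3 : (1:ℝ) + a * b / c ^ 2 ≠ 0 := ne_of_gt hD
    field_simp
    ring
  rw [mul_assoc, ← Real.mul_rpow (by apply div_nonneg <;> linarith)
    (by apply div_nonneg <;> linarith), key]
end

section
/- Let c > 0, ξ > 0, u : [0,c) → [0,c) a bijection, and define L(λ,v) = λ·((c-u(v))/(c+u(v)))^ξ and v ⊕ w = u⁻¹((u(v)+u(w))/(1 + u(v)u(w)/c²)). Then L satisfies the monotonicity axiom [M]: for all λ, λ' > 0 and v, v', w ∈ [0,c), L(λ,v) ≤ L(λ',v') if and only if L(λ, v ⊕ w) ≤ L(λ', v' ⊕ w). -/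
/-!
Writing `D a = (c - a) / (c + a)` for the Doppler factor of a speed `a`, relativistic velocity
addition multiplies Doppler factors: `D (a ⊕ b) = D a * D b`. Hence `L(λ, v ⊕ w) = L(λ, v) * D(u w)^ξ`,
and both sides of the equivalence differ by the same positive factor `D(u w)^ξ`.
-/

noncomputable section

namespace RelativisticAddition

variable {c a b : ℝ}

def velAdd (c a b : ℝ) : ℝ := (a + b) / (1 + a * b / c ^ 2)

def doppler (c a : ℝ) : ℝ := (c - a) / (c + a)

lemma doppler_pos (ha : a ∈ Set.Ico 0 c) : 0 < doppler c a :=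
  div_pos (by linarith [ha.2]) (by linarith [ha.1, ha.2])

lemma velAdd_mem_Ico (ha : a ∈ Set.Ico 0 c) (hb : b ∈ Set.Ico 0 c) :
    velAdd c a b ∈ Set.Ico 0 c := by
  obtain ⟨ha0, hac⟩ := ha
  obtain ⟨hb0, hbc⟩ := hb
  have hc : 0 < c := by linarith
  have hden : 0 < 1 + a * b / c ^ 2 := by positivity
  refine ⟨by unfold velAdd; positivity, ?_⟩
  rw [velAdd, div_lt_iff₀ hden]
  have hgap : c * (1 + a * b / c ^ 2) - (a + b) = (c - a) * (c - b) / c := by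
    field_simp; ring
  have : 0 < (c - a) * (c - b) / c := div_pos (mul_pos (by linarith) (by linarith)) hc
  linarith

lemma doppler_velAdd (ha : a ∈ Set.Ico 0 c) (hb : b ∈ Set.Ico 0 c) :
    doppler c (velAdd c a b) = doppler c a * doppler c b := by
  obtain ⟨ha0, hac⟩ := ha
  obtain ⟨hb0, hbc⟩ := hb
  have hc : 0 < c := by linarith
  have hden : 0 < 1 + a * b / c ^ 2 := by positivity
  have : c + (a + b) / (1 + a * b / c ^ 2) ≠ 0 := by positivity
  have : c + a ≠ 0 := by positivity
  have : c + b ≠ 0 := by positivity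
  unfold doppler velAdd
  field_simp
  ring

end RelativisticAddition

open RelativisticAddition

theorem stmt_11_general (c : ℝ) (ξ : ℝ)
    (u uinv : ℝ → ℝ)
    (humaps : ∀ v ∈ Set.Ico 0 c, u v ∈ Set.Ico 0 c)
    (huinvmaps : ∀ t ∈ Set.Ico 0 c, uinv t ∈ Set.Ico 0 c)
    (hright : ∀ t ∈ Set.Ico 0 c, u (uinv t) = t)
    (L : ℝ → ℝ → ℝ) (op : ℝ → ℝ → ℝ)
    (hL : ∀ l : ℝ, 0 < l → ∀ v ∈ Set.Ico 0 c, L l v = l * ((c - u v) / (c + u v)) ^ ξ)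
    (hop : ∀ v ∈ Set.Ico 0 c, ∀ w ∈ Set.Ico 0 c,
      op v w = uinv ((u v + u w) / (1 + u v * u w / c ^ 2))) :
    ∀ l l' : ℝ, 0 < l → 0 < l' →
      ∀ v ∈ Set.Ico 0 c, ∀ v' ∈ Set.Ico 0 c, ∀ w ∈ Set.Ico 0 c,
        (L l v ≤ L l' v' ↔ L l (op v w) ≤ L l' (op v' w)) := by
  intro l l' hl hl' v hv v' hv' w hw
  have huw := humaps w hw
  have L_op : ∀ m, 0 < m → ∀ x ∈ Set.Ico 0 c,
      L m (op x w) = L m x * doppler c (u w) ^ ξ := by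
    intro m hm x hx
    have hux := humaps x hx
    have hsum := velAdd_mem_Ico hux huw
    have hopx : op x w = uinv (velAdd c (u x) (u w)) := hop x hx w hw
    rw [hL m hm _ (hopx ▸ huinvmaps _ hsum), hopx, hright _ hsum, hL m hm x hx]
    change m * doppler c (velAdd c (u x) (u w)) ^ ξ = m * doppler c (u x) ^ ξ * _
    rw [doppler_velAdd hux huw,
      Real.mul_rpow (doppler_pos hux).le (doppler_pos huw).le, mul_assoc]
  rw [L_op l hl v hv, L_op l' hl' v' hv']
  exact (mul_le_mul_iff_left₀ (Real.rpow_pos_of_pos (doppler_pos huw) ξ)).symm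

theorem stmt_11 (c : ℝ) (hc : 0 < c) (ξ : ℝ) (hξ : 0 < ξ)
    (u uinv : ℝ → ℝ)
    (humaps : ∀ v ∈ Set.Ico 0 c, u v ∈ Set.Ico 0 c)
    (huinvmaps : ∀ t ∈ Set.Ico 0 c, uinv t ∈ Set.Ico 0 c)
    (hleft : ∀ v ∈ Set.Ico 0 c, uinv (u v) = v)
    (hright : ∀ t ∈ Set.Ico 0 c, u (uinv t) = t)
    (L : ℝ → ℝ → ℝ) (op : ℝ → ℝ → ℝ)
    (hL : ∀ l : ℝ, 0 < l → ∀ v ∈ Set.Ico 0 c, L l v = l * ((c - u v) / (c + u v)) ^ ξ)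
    (hop : ∀ v ∈ Set.Ico 0 c, ∀ w ∈ Set.Ico 0 c,
      op v w = uinv ((u v + u w) / (1 + u v * u w / c ^ 2))) :
    ∀ l l' : ℝ, 0 < l → 0 < l' →
      ∀ v ∈ Set.Ico 0 c, ∀ v' ∈ Set.Ico 0 c, ∀ w ∈ Set.Ico 0 c,
        (L l v ≤ L l' v' ↔ L l (op v w) ≤ L l' (op v' w)) :=
  stmt_11_general c ξ u uinv humaps huinvmaps hright L op hL hop
end
end

section
/- Let c > 0 and f : [0,c) → (0,1] be continuous, strictly decreasing with f(0) = 1, and suppose f(v)·f(w) = f((v+w)/(1+vw/c²)) for all v, w ∈ [0,c). Then there exists ξ > 0 such that f(v) = ((1 - v/c)/(1 + v/c))^ξ for all v ∈ [0,c). -/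
theorem stmt_12 (c : ℝ) (hc : 0 < c) (f : ℝ → ℝ)
    (hcont : ContinuousOn f (Set.Ico 0 c))
    (hanti : StrictAntiOn f (Set.Ico 0 c))
    (hrange : ∀ v ∈ Set.Ico 0 c, f v ∈ Set.Ioc (0:ℝ) 1)
    (hf0 : f 0 = 1)
    (hfe : ∀ v ∈ Set.Ico 0 c, ∀ w ∈ Set.Ico 0 c,
      f v * f w = f ((v + w) / (1 + v * w / c ^ 2))) :
    ∃ ξ : ℝ, 0 < ξ ∧ ∀ v ∈ Set.Ico 0 c,
      f v = ((1 - v / c) / (1 + v / c)) ^ ξ := by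
  have hc' : c ≠ 0 := ne_of_gt hc
  set ψ : ℝ → ℝ := fun t => c * (Real.exp t - 1) / (Real.exp t + 1) with hψdef
  have hexp1 : ∀ t : ℝ, (0:ℝ) < Real.exp t + 1 := fun t => by positivity
  have hmem : ∀ t : ℝ, 0 ≤ t → ψ t ∈ Set.Ico 0 c := by
    intro t ht
    have h1 : (1:ℝ) ≤ Real.exp t := Real.one_le_exp ht
    constructor
    · apply div_nonneg _ (le_of_lt (hexp1 t))
      nlinarith
    · rw [hψdef]
      simp only
      rw [div_lt_iff₀ (hexp1 t)]
      nlinarith [Real.exp_pos t]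
  have hψ0 : ψ 0 = 0 := by rw [hψdef]; simp
  -- strict monotonicity of ψ
  have hψmono : ∀ s t : ℝ, s < t → ψ s < ψ t := by
    intro s t hst
    have he : Real.exp s < Real.exp t := Real.exp_lt_exp.2 hst
    rw [hψdef]
    simp only
    rw [div_lt_div_iff₀ (hexp1 s) (hexp1 t)]
    nlinarith [Real.exp_pos s, Real.exp_pos t]
  -- addition law
  have hadd : ∀ s t : ℝ, 0 ≤ s → 0 ≤ t →
      (ψ s + ψ t) / (1 + ψ s * ψ t / c ^ 2) = ψ (s + t) := by
    intro s t hs ht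
    have has := hexp1 s
    have hat := hexp1 t
    have hψs := (hmem s hs).1
    have hψt := (hmem t ht).1
    have hden : (0:ℝ) < 1 + ψ s * ψ t / c ^ 2 := by positivity
    have key1 : 1 + ψ s * ψ t / c ^ 2 =
        2 * (Real.exp s * Real.exp t + 1) / ((Real.exp s + 1) * (Real.exp t + 1)) := by
      rw [hψdef]; simp only; field_simp; ring
    have key2 : ψ s + ψ t =
        2 * c * (Real.exp s * Real.exp t - 1) / ((Real.exp s + 1) * (Real.exp t + 1)) := by
      rw [hψdef]; simp only; field_simp; ring
    rw [key1, key2, hψdef]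
    simp only [Real.exp_add]
    have h1 : Real.exp s * Real.exp t + 1 ≠ 0 := by positivity
    have h2 : (Real.exp s + 1) * (Real.exp t + 1) ≠ 0 := by positivity
    field_simp
  -- the additive function g
  set g : ℝ → ℝ := fun t => -Real.log (f (ψ t)) with hgdef
  have hfpos : ∀ t : ℝ, 0 ≤ t → 0 < f (ψ t) := fun t ht => (hrange _ (hmem t ht)).1
  have hgadd : ∀ s t : ℝ, 0 ≤ s → 0 ≤ t → g (s + t) = g s + g t := by
    intro s t hs ht
    have h1 := hfe (ψ s) (hmem s hs) (ψ t) (hmem t ht)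
    rw [hadd s t hs ht] at h1
    rw [hgdef]
    simp only
    rw [← h1, Real.log_mul (ne_of_gt (hfpos s hs)) (ne_of_gt (hfpos t ht))]
    ring
  have hg0 : g 0 = 0 := by rw [hgdef]; simp [hψ0, hf0]
  -- monotonicity of g
  have hgmono : ∀ s t : ℝ, 0 ≤ s → s < t → g s < g t := by
    intro s t hs hst
    have ht : (0:ℝ) ≤ t := le_trans hs (le_of_lt hst)
    have h1 : f (ψ t) < f (ψ s) :=
      hanti (hmem s hs) (hmem t ht) (hψmono s t hst)
    have h2 : Real.log (f (ψ t)) < Real.log (f (ψ s)) :=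
      Real.log_lt_log (hfpos t ht) h1
    rw [hgdef]; simp only; linarith
  have hgmono' : ∀ s t : ℝ, 0 ≤ s → s ≤ t → g s ≤ g t := by
    intro s t hs hst
    rcases eq_or_lt_of_le hst with h | h
    · rw [h]
    · exact le_of_lt (hgmono s t hs h)
  -- g (n * x) = n * g x
  have hgnat : ∀ (n : ℕ) (x : ℝ), 0 ≤ x → g (n * x) = n * g x := by
    intro n
    induction n with
    | zero => intro x hx; simpa using hg0
    | succ n ih =>
      intro x hx
      have h1 : ((n : ℝ) + 1) * x = (n : ℝ) * x + x := by ring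
      push_cast
      rw [h1, hgadd _ _ (by positivity) hx, ih x hx]
      ring
  set L : ℝ := g 1 with hLdef
  have hL : 0 < L := by rw [hLdef, ← hg0]; exact hgmono 0 1 le_rfl one_pos
  -- rational values
  have hgrat : ∀ m n : ℕ, 0 < n → g ((m : ℝ) / (n : ℝ)) = L * ((m : ℝ) / (n : ℝ)) := by
    intro m n hn
    have hn' : (n : ℝ) ≠ 0 := Nat.cast_ne_zero.2 hn.ne'
    have hd : (0:ℝ) ≤ (m : ℝ) / (n : ℝ) := by positivity
    have h1 : g ((n : ℝ) * ((m : ℝ) / (n : ℝ))) = (n : ℝ) * g ((m : ℝ) / (n : ℝ)) :=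
      hgnat n _ hd
    have h2 : (n : ℝ) * ((m : ℝ) / (n : ℝ)) = (m : ℝ) := by field_simp
    have h3 : g (m : ℝ) = (m : ℝ) * L := by
      have := hgnat m 1 zero_le_one
      simpa [hLdef] using this
    rw [h2, h3] at h1
    field_simp at h1 ⊢
    linarith
  have hgq : ∀ q : ℚ, 0 < q → g (q : ℝ) = L * (q : ℝ) := by
    intro q hq
    have hnum : 0 < q.num := Rat.num_pos.2 hq
    have hden : 0 < q.den := q.pos
    have hcast : ((q.num.toNat : ℝ) / (q.den : ℝ)) = (q : ℝ) := by
      rw [Rat.cast_def]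
      congr 1
      exact_mod_cast Int.toNat_of_nonneg (le_of_lt hnum)
    rw [← hcast]
    exact hgrat q.num.toNat q.den hden
  -- linearity
  have hglin : ∀ t : ℝ, 0 ≤ t → g t = L * t := by
    intro t ht
    have hgt0 : 0 ≤ g t := by rw [← hg0]; exact hgmono' 0 t le_rfl ht
    apply le_antisymm
    · by_contra hlt
      push_neg at hlt
      have h1 : t < g t / L := (lt_div_iff₀ hL).2 (by linarith [mul_comm L t])
      obtain ⟨q, hq1, hq2⟩ := exists_rat_btwn h1
      have hq0 : (0:ℝ) < (q : ℝ) := lt_of_le_of_lt ht hq1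
      have hgq' : g (q : ℝ) = L * (q : ℝ) := hgq q (by exact_mod_cast hq0)
      have h2 : g t ≤ g (q : ℝ) := hgmono' t _ ht (le_of_lt hq1)
      rw [hgq'] at h2
      have h3 : L * (q : ℝ) < L * (g t / L) := (mul_lt_mul_iff_right₀ hL).2 hq2
      rw [mul_div_cancel₀ _ (ne_of_gt hL)] at h3
      linarith
    · by_contra hlt
      push_neg at hlt
      have h1 : g t / L < t := (div_lt_iff₀ hL).2 (by linarith [mul_comm L t])
      obtain ⟨q, hq1, hq2⟩ := exists_rat_btwn h1
      have hq0 : (0:ℝ) < (q : ℝ) := lt_of_le_of_lt (by positivity) hq1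
      have hgq' : g (q : ℝ) = L * (q : ℝ) := hgq q (by exact_mod_cast hq0)
      have h2 : g (q : ℝ) ≤ g t := hgmono' _ t (le_of_lt hq0) (le_of_lt hq2)
      rw [hgq'] at h2
      have h3 : L * (g t / L) < L * (q : ℝ) := (mul_lt_mul_iff_right₀ hL).2 hq1
      rw [mul_div_cancel₀ _ (ne_of_gt hL)] at h3
      linarith
  -- conclusion
  refine ⟨L, hL, fun v hv => ?_⟩
  obtain ⟨hv0, hvc⟩ := hv
  have hcv : (0:ℝ) < c - v := by linarith
  have hcv' : (0:ℝ) < c + v := by linarith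
  set t : ℝ := Real.log ((c + v) / (c - v)) with htdef
  have hr1 : (1:ℝ) ≤ (c + v) / (c - v) := (le_div_iff₀ hcv).2 (by linarith)
  have ht0 : 0 ≤ t := Real.log_nonneg hr1
  have hψt : ψ t = v := by
    rw [hψdef, htdef]
    simp only
    rw [Real.exp_log (by positivity)]
    field_simp
    ring
  have hgt : g t = L * t := hglin t ht0
  have hfv : Real.log (f v) = -(L * t) := by
    rw [hgdef] at hgt
    simp only at hgt
    rw [hψt] at hgt
    linarith
  have hfvpos : 0 < f v := (hrange v ⟨hv0, hvc⟩).1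
  have hbase : (1 - v / c) / (1 + v / c) = (c - v) / (c + v) := by
    field_simp
  rw [hbase]
  have hbpos : (0:ℝ) < (c - v) / (c + v) := by positivity
  rw [Real.rpow_def_of_pos hbpos]
  have hlogb : Real.log ((c - v) / (c + v)) = -t := by
    rw [htdef, ← Real.log_inv, inv_div]
  rw [hlogb]
  rw [← Real.exp_log hfvpos, hfv]
  ring_nf
end

section
/- Let c > 0. Suppose a binary operation ⊕ on [0,c) satisfies √(1-(v/c)²)·√(1-(w/c)²) = √(1-((v⊕w)/c)²) for all v, w ∈ [0,c) (i.e., [LF] with axiom [R]). Then v ⊕ w = c·√((v/c)² + (w/c)² - (v/c)²(w/c)²) for all v, w ∈ [0,c). -/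
theorem stmt_14 (c : ℝ) (hc : 0 < c) (op : ℝ → ℝ → ℝ)
    (hclosed : ∀ v ∈ Set.Ico 0 c, ∀ w ∈ Set.Ico 0 c, op v w ∈ Set.Ico 0 c)
    (hfe : ∀ v ∈ Set.Ico 0 c, ∀ w ∈ Set.Ico 0 c,
      Real.sqrt (1 - (v / c) ^ 2) * Real.sqrt (1 - (w / c) ^ 2) =
        Real.sqrt (1 - (op v w / c) ^ 2)) :
    ∀ v ∈ Set.Ico 0 c, ∀ w ∈ Set.Ico 0 c,
      op v w = c * Real.sqrt ((v / c) ^ 2 + (w / c) ^ 2 - (v / c) ^ 2 * (w / c) ^ 2) := by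
  intro v hv w hw
  obtain ⟨hv0, hv1⟩ := hv
  obtain ⟨hw0, hw1⟩ := hw
  obtain ⟨hu0, hu1⟩ := hclosed v ⟨hv0, hv1⟩ w ⟨hw0, hw1⟩
  set u := op v w with hu
  have hvc : (v / c) ^ 2 < 1 := by
    have : v / c < 1 := (div_lt_one hc).2 hv1
    nlinarith [div_nonneg hv0 hc.le]
  have hwc : (w / c) ^ 2 < 1 := by
    have : w / c < 1 := (div_lt_one hc).2 hw1
    nlinarith [div_nonneg hw0 hc.le]
  have huc : (u / c) ^ 2 < 1 := by
    have : u / c < 1 := (div_lt_one hc).2 hu1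
    nlinarith [div_nonneg hu0 hc.le]
  have h := hfe v ⟨hv0, hv1⟩ w ⟨hw0, hw1⟩
  rw [← Real.sqrt_mul (by linarith)] at h
  have hsq : (1 - (v / c) ^ 2) * (1 - (w / c) ^ 2) = 1 - (u / c) ^ 2 := by
    have h1 : (0:ℝ) ≤ (1 - (v / c) ^ 2) * (1 - (w / c) ^ 2) :=
      mul_nonneg (by linarith) (by linarith)
    rw [← Real.sq_sqrt h1, h, Real.sq_sqrt (by linarith : (0:ℝ) ≤ 1 - (op v w / c) ^ 2)]
  have key : (u / c) ^ 2 = (v / c) ^ 2 + (w / c) ^ 2 - (v / c) ^ 2 * (w / c) ^ 2 := by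
    nlinarith [hsq]
  rw [← key, Real.sqrt_sq (by positivity), mul_div_cancel₀ _ hc.ne']
end

section
/- Let c > 0 and define u : [0,c) → [0,c) by u(v) = c·(v/c)²/(2 - (v/c)²). Then u is a strictly increasing continuous bijection of [0,c) onto [0,c), and for all v ∈ [0,c), √((c - u(v))/(c + u(v))) = √(1 - (v/c)²). -/
theorem stmt_15 (c : ℝ) (hc : 0 < c) (u : ℝ → ℝ)
    (hu : ∀ v : ℝ, u v = c * (v / c) ^ 2 / (2 - (v / c) ^ 2)) :
    StrictMonoOn u (Set.Ico 0 c) ∧ ContinuousOn u (Set.Ico 0 c) ∧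
    u '' Set.Ico 0 c = Set.Ico 0 c ∧
    ∀ v ∈ Set.Ico 0 c,
      Real.sqrt ((c - u v) / (c + u v)) = Real.sqrt (1 - (v / c) ^ 2) := by
  have hfrac : ∀ v ∈ Set.Ico (0:ℝ) c, 0 ≤ v / c ∧ v / c < 1 := by
    intro v hv
    exact ⟨div_nonneg hv.1 hc.le, (div_lt_one hc).mpr hv.2⟩
  have ht : ∀ v ∈ Set.Ico (0:ℝ) c, 0 ≤ (v/c)^2 ∧ (v/c)^2 < 1 := by
    intro v hv
    obtain ⟨h0, h1⟩ := hfrac v hv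
    exact ⟨sq_nonneg _, pow_lt_one₀ h0 h1 two_ne_zero⟩
  have hden : ∀ v ∈ Set.Ico (0:ℝ) c, 0 < 2 - (v/c)^2 := by
    intro v hv; linarith [(ht v hv).2]
  have hmono : StrictMonoOn u (Set.Ico 0 c) := by
    intro a ha b hb hab
    rw [hu, hu]
    have hda := hden a ha; have hdb := hden b hb
    have hab' : a / c < b / c := by gcongr
    have hta : (a/c)^2 < (b/c)^2 :=
      pow_lt_pow_left₀ hab' (hfrac a ha).1 two_ne_zero
    rw [div_lt_div_iff₀ hda hdb]
    nlinarith
  have hrange : ∀ v ∈ Set.Ico (0:ℝ) c, u v ∈ Set.Ico (0:ℝ) c := by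
    intro v hv
    obtain ⟨h0, h1⟩ := ht v hv
    have hd := hden v hv
    rw [hu]
    constructor
    · positivity
    · rw [div_lt_iff₀ hd]; nlinarith
  refine ⟨hmono, ?_, ?_, ?_⟩
  · apply ContinuousOn.congr (f := fun v => c * (v / c) ^ 2 / (2 - (v / c) ^ 2))
    · apply ContinuousOn.div
      · fun_prop
      · fun_prop
      · intro v hv; exact ne_of_gt (hden v hv)
    · intro v hv; exact hu v
  · apply Set.Subset.antisymm
    · rintro w ⟨v, hv, rfl⟩; exact hrange v hv
    · rintro w ⟨hw0, hw1⟩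
      set t : ℝ := 2 * w / (c + w) with htdef
      have hcw : 0 < c + w := by linarith
      have ht0 : 0 ≤ t := by positivity
      have ht1 : t < 1 := by rw [div_lt_one hcw]; linarith
      refine ⟨c * Real.sqrt t, ⟨by positivity, ?_⟩, ?_⟩
      · have : Real.sqrt t < 1 := by
          rw [show (1:ℝ) = Real.sqrt 1 by simp]
          exact Real.sqrt_lt_sqrt ht0 ht1
        nlinarith
      · rw [hu]
        have hcc : c * Real.sqrt t / c = Real.sqrt t := by field_simp
        have hsq : (c * Real.sqrt t / c)^2 = t := by rw [hcc, Real.sq_sqrt ht0]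
        have hne : (2 - t) ≠ 0 := by linarith
        rw [hsq, div_eq_iff hne, htdef]
        field_simp
        ring
  · intro v hv
    have hd := hden v hv
    have h1 : (c - u v) / (c + u v) = 1 - (v/c)^2 := by
      have hcu : 0 < c + u v := by linarith [(hrange v hv).1]
      rw [hu] at hcu ⊢
      have h2 : v^2 < c^2 := by nlinarith [hv.1, hv.2]
      have hX : (2:ℝ) * c^2 - v^2 ≠ 0 := by nlinarith
      have hX' : c^2 * 2 - v^2 ≠ 0 := by nlinarith
      rw [div_eq_iff hcu.ne']
      field_simp
      ring
    rw [h1]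
end

section
/- Let c > 0 and define v ⊕ w = c·√((v/c)² + (w/c)² - (v/c)²(w/c)²) on [0,c). Then: (i) 0 ≤ v ⊕ w < c for all v, w ∈ [0,c); (ii) 0 ⊕ v = v ⊕ 0 = v; (iii) ⊕ is strictly increasing in each variable; and (iv) ⊕ is commutative and associative. -/
theorem stmt_16 (c : ℝ) (hc : 0 < c) (op : ℝ → ℝ → ℝ)
    (hop : ∀ v ∈ Set.Ico 0 c, ∀ w ∈ Set.Ico 0 c,
      op v w = c * Real.sqrt ((v / c) ^ 2 + (w / c) ^ 2 - (v / c) ^ 2 * (w / c) ^ 2)) :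
    (∀ v ∈ Set.Ico 0 c, ∀ w ∈ Set.Ico 0 c, op v w ∈ Set.Ico 0 c) ∧
    (∀ v ∈ Set.Ico 0 c, op 0 v = v ∧ op v 0 = v) ∧
    (∀ w ∈ Set.Ico 0 c, StrictMonoOn (fun v => op v w) (Set.Ico 0 c)) ∧
    (∀ v ∈ Set.Ico 0 c, StrictMonoOn (fun w => op v w) (Set.Ico 0 c)) ∧
    (∀ v ∈ Set.Ico 0 c, ∀ w ∈ Set.Ico 0 c, op v w = op w v) ∧
    (∀ v ∈ Set.Ico 0 c, ∀ w ∈ Set.Ico 0 c, ∀ x ∈ Set.Ico 0 c,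
      op (op v w) x = op v (op w x)) := by
  have key : ∀ v ∈ Set.Ico 0 c, ∀ w ∈ Set.Ico 0 c,
      op v w ∈ Set.Ico 0 c ∧
      1 - (op v w / c) ^ 2 = (1 - (v / c) ^ 2) * (1 - (w / c) ^ 2) := by
    intro v hv w hw
    obtain ⟨hv0, hvc⟩ := hv
    obtain ⟨hw0, hwc⟩ := hw
    have ha0 : 0 ≤ v / c := div_nonneg hv0 hc.le
    have ha1 : v / c < 1 := (div_lt_one hc).2 hvc
    have hb0 : 0 ≤ w / c := div_nonneg hw0 hc.le
    have hb1 : w / c < 1 := (div_lt_one hc).2 hwc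
    have hA : (v / c) ^ 2 < 1 := by nlinarith
    have hB : (w / c) ^ 2 < 1 := by nlinarith
    have hI0 : 0 ≤ (v / c) ^ 2 + (w / c) ^ 2 - (v / c) ^ 2 * (w / c) ^ 2 := by
      nlinarith [mul_nonneg (sq_nonneg (v / c)) (sub_nonneg.2 hB.le), sq_nonneg (w / c)]
    have hI1 : (v / c) ^ 2 + (w / c) ^ 2 - (v / c) ^ 2 * (w / c) ^ 2 < 1 := by
      nlinarith [mul_pos (sub_pos.2 hA) (sub_pos.2 hB)]
    set I := (v / c) ^ 2 + (w / c) ^ 2 - (v / c) ^ 2 * (w / c) ^ 2 with hI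
    have hs0 : 0 ≤ Real.sqrt I := Real.sqrt_nonneg I
    have hs1 : Real.sqrt I < 1 := by
      have := Real.sqrt_lt_sqrt hI0 hI1
      simpa using this
    rw [hop v ⟨hv0, hvc⟩ w ⟨hw0, hwc⟩]
    refine ⟨⟨mul_nonneg hc.le hs0, by nlinarith⟩, ?_⟩
    have hdiv : c * Real.sqrt I / c = Real.sqrt I := by field_simp
    rw [hdiv, Real.sq_sqrt hI0]
    ring
  have mono : ∀ w ∈ Set.Ico 0 c, ∀ v1 ∈ Set.Ico 0 c, ∀ v2 ∈ Set.Ico 0 c,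
      v1 < v2 → op v1 w < op v2 w := by
    intro w hw v1 hv1 v2 hv2 h12
    obtain ⟨hw0, hwc⟩ := hw
    have hb0 : 0 ≤ w / c := div_nonneg hw0 hc.le
    have hb1 : w / c < 1 := (div_lt_one hc).2 hwc
    have ha10 : 0 ≤ v1 / c := div_nonneg hv1.1 hc.le
    have hlt : v1 / c < v2 / c := by gcongr
    have hB : (w / c) ^ 2 < 1 := by nlinarith
    have hI0 : 0 ≤ (v1 / c) ^ 2 + (w / c) ^ 2 - (v1 / c) ^ 2 * (w / c) ^ 2 := by
      nlinarith [mul_nonneg (sq_nonneg (v1 / c)) (sub_nonneg.2 hB.le), sq_nonneg (w / c)]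
    have hsq : (v1 / c) ^ 2 < (v2 / c) ^ 2 := by nlinarith
    have hIlt : (v1 / c) ^ 2 + (w / c) ^ 2 - (v1 / c) ^ 2 * (w / c) ^ 2
        < (v2 / c) ^ 2 + (w / c) ^ 2 - (v2 / c) ^ 2 * (w / c) ^ 2 := by
      nlinarith [mul_pos (sub_pos.2 hsq) (sub_pos.2 hB)]
    rw [hop v1 hv1 w ⟨hw0, hwc⟩, hop v2 hv2 w ⟨hw0, hwc⟩]
    exact mul_lt_mul_of_pos_left (Real.sqrt_lt_sqrt hI0 hIlt) hc
  have comm : ∀ v ∈ Set.Ico 0 c, ∀ w ∈ Set.Ico 0 c, op v w = op w v := by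
    intro v hv w hw
    rw [hop v hv w hw, hop w hw v hv]
    ring_nf
  refine ⟨fun v hv w hw => (key v hv w hw).1, ?_, ?_, ?_, comm, ?_⟩
  · intro v hv
    obtain ⟨hv0, hvc⟩ := hv
    have h0 : (0 : ℝ) ∈ Set.Ico 0 c := ⟨le_refl 0, hc⟩
    have ha0 : 0 ≤ v / c := div_nonneg hv0 hc.le
    constructor
    · rw [hop 0 h0 v ⟨hv0, hvc⟩]
      simp only [zero_div]
      rw [show (0:ℝ)^2 + (v/c)^2 - (0:ℝ)^2 * (v/c)^2 = (v/c)^2 by ring,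
        Real.sqrt_sq ha0]
      field_simp
    · rw [hop v ⟨hv0, hvc⟩ 0 h0]
      simp only [zero_div]
      rw [show (v/c)^2 + (0:ℝ)^2 - (v/c)^2 * (0:ℝ)^2 = (v/c)^2 by ring,
        Real.sqrt_sq ha0]
      field_simp
  · intro w hw v1 hv1 v2 hv2 h12
    exact mono w hw v1 hv1 v2 hv2 h12
  · intro v hv w1 hw1 w2 hw2 h12
    simp only
    rw [comm v hv w1 hw1, comm v hv w2 hw2]
    exact mono v hv w1 hw1 w2 hw2 h12
  · intro v hv w hw x hx
    obtain ⟨hVmem, hV⟩ := key v hv w hw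
    obtain ⟨hWmem, hW⟩ := key w hw x hx
    rw [hop (op v w) hVmem x hx, hop v hv (op w x) hWmem]
    congr 1
    have e1 : (op v w / c) ^ 2 + (x / c) ^ 2 - (op v w / c) ^ 2 * (x / c) ^ 2
        = 1 - (1 - (op v w / c) ^ 2) * (1 - (x / c) ^ 2) := by ring
    have e2 : (v / c) ^ 2 + (op w x / c) ^ 2 - (v / c) ^ 2 * (op w x / c) ^ 2
        = 1 - (1 - (v / c) ^ 2) * (1 - (op w x / c) ^ 2) := by ring
    rw [e1, e2, hV, hW]
    ring
end

section
/- Let c > 0, u(v) = c·(v/c)²/(2-(v/c)²) with inverse u⁻¹(t) = c·√(2t/(c+t)). Then for all v, w ∈ [0,c), u⁻¹((u(v) + u(w))/(1 + u(v)·u(w)/c²)) = c·√((v/c)² + (w/c)² - (v/c)²(w/c)²). -/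
theorem stmt_17 (c : ℝ) (hc : 0 < c) (u uinv : ℝ → ℝ)
    (hu : ∀ v : ℝ, u v = c * (v / c) ^ 2 / (2 - (v / c) ^ 2))
    (huinv : ∀ t : ℝ, uinv t = c * Real.sqrt (2 * t / (c + t))) :
    ∀ v ∈ Set.Ico 0 c, ∀ w ∈ Set.Ico 0 c,
      uinv ((u v + u w) / (1 + u v * u w / c ^ 2)) =
        c * Real.sqrt ((v / c) ^ 2 + (w / c) ^ 2 - (v / c) ^ 2 * (w / c) ^ 2) := by
  intro v hv w hw
  obtain ⟨hv0, hv1⟩ := hv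
  obtain ⟨hw0, hw1⟩ := hw
  set x := v / c with hxdef
  set y := w / c with hydef
  have hx0 : 0 ≤ x := div_nonneg hv0 hc.le
  have hx1 : x < 1 := (div_lt_one hc).2 hv1
  have hy0 : 0 ≤ y := div_nonneg hw0 hc.le
  have hy1 : y < 1 := (div_lt_one hc).2 hw1
  have hdx : 0 < 2 - x ^ 2 := by nlinarith
  have hdy : 0 < 2 - y ^ 2 := by nlinarith
  set s := x ^ 2 + y ^ 2 - x ^ 2 * y ^ 2 with hsdef
  have hs0 : 0 ≤ s := by nlinarith
  have hs2 : s < 2 := by nlinarith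
  have huv0 : 0 ≤ u v := by
    rw [hu]
    exact div_nonneg (by positivity) hdx.le
  have huw0 : 0 ≤ u w := by
    rw [hu]
    exact div_nonneg (by positivity) hdy.le
  have hne : (1 : ℝ) + u v * u w / c ^ 2 ≠ 0 := by positivity
  have key : (u v + u w) / (1 + u v * u w / c ^ 2) = c * s / (2 - s) := by
    rw [hu, hu, hsdef]
    rw [← hxdef, ← hydef]
    rw [div_eq_div_iff (by
      have : (0:ℝ) < 1 + c * x ^ 2 / (2 - x ^ 2) * (c * y ^ 2 / (2 - y ^ 2)) / c ^ 2 := by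
        have h1 : 0 ≤ c * x ^ 2 / (2 - x ^ 2) := div_nonneg (by positivity) hdx.le
        have h2 : 0 ≤ c * y ^ 2 / (2 - y ^ 2) := div_nonneg (by positivity) hdy.le
        positivity
      exact this.ne') (by linarith : (2:ℝ) - (x ^ 2 + y ^ 2 - x ^ 2 * y ^ 2) ≠ 0)]
    field_simp
    ring
  rw [huinv, key]
  have hpos : 0 < c + c * s / (2 - s) := by
    have : 0 ≤ c * s / (2 - s) := div_nonneg (by positivity) (by linarith)
    linarith
  have harg : 2 * (c * s / (2 - s)) / (c + c * s / (2 - s)) = s := by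
    have h2s : (2:ℝ) - s ≠ 0 := by linarith
    rw [div_eq_iff hpos.ne']
    field_simp [h2s]
    ring
  rw [harg]
end
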